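/- arXiv:1410.6457 — 2 statements merged into one kernel-verified Lean document; each statement's English description precedes it below -/
import Mathlib

section
/- Let p ≡ 1 (mod 4) be a prime, let χ be the Legendre symbol mod p, and suppose 0 < α and 0 < β < 2 are such that |∑_{a∈S, b∈S} χ(a−b)| < |S|^{2−β} for every subset S ⊆ F_p with |S| > p^α. Then for every real τ ≥ 2α/(2−β) and every pair of disjoint subsets I, J ⊆ F_p with |J| ≤ |I| ≤ p^{2τ/(2−β)}, one has |∑_{i∈I, j∈J} χ(i−j)| ≤ p^τ · √(3·|I|·|J|). -/
open scoped BigOperators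

/-!
Since `p ≡ 1 (mod 4)`, `χ(-1) = 1`, so `χ(a - b)` is symmetric in `a, b` and polarization gives,
for disjoint `I, J`,
`2 ∑_{I×J} χ(i - j) = ∑_{(I∪J)²} - ∑_{I²} - ∑_{J²}`.
A diagonal sum over a set of size at most `c·x` (`c ≥ 1`) is at most `c² x^(2-β)`: by hypothesis
when the set is larger than `p^α`, and by the trivial bound `|S|² ≤ p^(2α)` otherwise. With
`x = p^(2τ/(2-β))`, so that `x^(2-β) = p^(2τ)`, the sets `I`, `J`, `I ∪ J` give
`|∑_{I×J}| ≤ (4 + 1 + 1)/2 · p^(2τ)`, and the geometric mean of this with the trivial bound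
`|I||J|` is the claim.
-/

open Finset

section QuadraticChar

variable {F : Type*} [Field F] [Fintype F] [DecidableEq F]

theorem quadraticChar_neg_of_card_mod_four_eq_one (hF : Fintype.card F % 4 = 1) (x : F) :
    quadraticChar F (-x) = quadraticChar F x := by
  have h : quadraticChar F (-1) = 1 :=
    (quadraticChar_one_iff_isSquare (neg_ne_zero.mpr one_ne_zero)).mpr
      (FiniteField.isSquare_neg_one_iff.mpr (by omega))
  rw [neg_eq_neg_one_mul, map_mul, h, one_mul]

theorem abs_quadraticChar_le_one (x : F) : |quadraticChar F x| ≤ 1 := by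
  rcases quadraticChar_isQuadratic F x with h | h | h <;> simp [h]

end QuadraticChar

section CrossSum

variable {G R : Type*} [AddCommGroup G]

def crossSum [AddCommMonoid R] (f : G → R) (A B : Finset G) : R :=
  ∑ a ∈ A, ∑ b ∈ B, f (a - b)

theorem crossSum_comm [AddCommMonoid R] {f : G → R} (hf : ∀ x, f (-x) = f x) (A B : Finset G) :
    crossSum f B A = crossSum f A B := by
  rw [crossSum, sum_comm]
  exact sum_congr rfl fun a _ => sum_congr rfl fun b _ => by rw [← hf, neg_sub]

theorem crossSum_union_left [DecidableEq G] [AddCommMonoid R] (f : G → R) {A B : Finset G}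
    (hAB : Disjoint A B) (C : Finset G) :
    crossSum f (A ∪ B) C = crossSum f A C + crossSum f B C :=
  sum_union hAB

theorem crossSum_union_right [DecidableEq G] [AddCommMonoid R] (f : G → R) (C : Finset G)
    {A B : Finset G} (hAB : Disjoint A B) :
    crossSum f C (A ∪ B) = crossSum f C A + crossSum f C B := by
  simp only [crossSum, sum_union hAB, sum_add_distrib]

theorem crossSum_union_self [DecidableEq G] [Semiring R] {f : G → R} (hf : ∀ x, f (-x) = f x)
    {A B : Finset G} (hAB : Disjoint A B) :
    crossSum f (A ∪ B) (A ∪ B) = crossSum f A A + crossSum f B B + 2 * crossSum f A B := by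
  rw [crossSum_union_left f hAB, crossSum_union_right f _ hAB, crossSum_union_right f _ hAB,
    crossSum_comm hf A B, two_mul]
  abel

theorem abs_crossSum_le_card_mul {f : G → ℝ} (hf : ∀ x, |f x| ≤ 1) (A B : Finset G) :
    |crossSum f A B| ≤ #A * #B := by
  calc |crossSum f A B| ≤ ∑ a ∈ A, ∑ b ∈ B, |f (a - b)| :=
        (abs_sum_le_sum_abs _ _).trans (sum_le_sum fun a _ => abs_sum_le_sum_abs _ _)
    _ ≤ ∑ a ∈ A, ∑ b ∈ B, (1 : ℝ) := by gcongr with a _ b _; exact hf _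
    _ = #A * #B := by simp

end CrossSum

section Discrepancy

variable {G : Type*} [AddCommGroup G] {f : G → ℝ} {T γ x : ℝ}

theorem abs_crossSum_self_le (hf : ∀ y, |f y| ≤ 1) (hγ0 : 0 ≤ γ) (hγ2 : γ ≤ 2)
    (hT : T ^ 2 ≤ x ^ γ) (hdisc : ∀ S : Finset G, T < #S → |crossSum f S S| < (#S : ℝ) ^ γ)
    {c : ℝ} (hc : 1 ≤ c) {S : Finset G} (hS : #S ≤ c * x) :
    |crossSum f S S| ≤ c ^ 2 * x ^ γ := by
  have hx : 0 ≤ x := nonneg_of_mul_nonneg_right ((Nat.cast_nonneg _).trans hS) (by linarith)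
  rcases le_or_gt (#S : ℝ) T with hST | hTS
  · calc |crossSum f S S| ≤ #S * #S := abs_crossSum_le_card_mul hf S S
      _ ≤ T ^ 2 := by rw [← sq]; exact pow_le_pow_left₀ (Nat.cast_nonneg _) hST 2
      _ ≤ x ^ γ := hT
      _ ≤ c ^ 2 * x ^ γ := le_mul_of_one_le_left (Real.rpow_nonneg hx γ) (one_le_pow₀ hc)
  · calc |crossSum f S S| ≤ (#S : ℝ) ^ γ := (hdisc S hTS).le
      _ ≤ (c * x) ^ γ := Real.rpow_le_rpow (Nat.cast_nonneg _) hS hγ0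
      _ = c ^ γ * x ^ γ := Real.mul_rpow (by linarith) hx
      _ ≤ c ^ (2 : ℝ) * x ^ γ :=
        mul_le_mul_of_nonneg_right (Real.rpow_le_rpow_of_exponent_le hc hγ2)
          (Real.rpow_nonneg hx γ)
      _ = c ^ 2 * x ^ γ := by rw [Real.rpow_two]

theorem abs_crossSum_le_three_mul [DecidableEq G] (hf : ∀ y, |f y| ≤ 1) (hf_neg : ∀ y, f (-y) = f y)
    (hγ0 : 0 ≤ γ) (hγ2 : γ ≤ 2) (hT : T ^ 2 ≤ x ^ γ)
    (hdisc : ∀ S : Finset G, T < #S → |crossSum f S S| < (#S : ℝ) ^ γ)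
    {A B : Finset G} (hAB : Disjoint A B) (hBA : #B ≤ #A) (hA : #A ≤ x) :
    |crossSum f A B| ≤ 3 * x ^ γ := by
  have hB : (#B : ℝ) ≤ x := (Nat.cast_le.mpr hBA).trans hA
  have hAA := abs_crossSum_self_le hf hγ0 hγ2 hT hdisc le_rfl (S := A) (by rwa [one_mul])
  have hBB := abs_crossSum_self_le hf hγ0 hγ2 hT hdisc le_rfl (S := B) (by rwa [one_mul])
  have hUU := abs_crossSum_self_le hf hγ0 hγ2 hT hdisc one_le_two (S := A ∪ B) <|
    calc (#(A ∪ B) : ℝ) ≤ #A + #B := mod_cast card_union_le A B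
      _ ≤ 2 * x := by linarith
  rw [crossSum_union_self hf_neg hAB] at hUU
  rw [abs_le] at *
  constructor <;> linarith

theorem abs_crossSum_le_sqrt_mul [DecidableEq G] (hf : ∀ y, |f y| ≤ 1)
    (hf_neg : ∀ y, f (-y) = f y) (hγ0 : 0 ≤ γ) (hγ2 : γ ≤ 2) (hT : T ^ 2 ≤ x ^ γ)
    (hdisc : ∀ S : Finset G, T < #S → |crossSum f S S| < (#S : ℝ) ^ γ)
    {A B : Finset G} (hAB : Disjoint A B) (hBA : #B ≤ #A) (hA : #A ≤ x) :
    |crossSum f A B| ≤ √(x ^ γ) * √(3 * #A * #B) := by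
  have hx : 0 ≤ x := (Nat.cast_nonneg _).trans hA
  rw [← Real.sqrt_mul (Real.rpow_nonneg hx γ), Real.le_sqrt (abs_nonneg _) (by positivity)]
  calc |crossSum f A B| ^ 2 = |crossSum f A B| * |crossSum f A B| := sq _
    _ ≤ (3 * x ^ γ) * (#A * #B) :=
      mul_le_mul (abs_crossSum_le_three_mul hf hf_neg hγ0 hγ2 hT hdisc hAB hBA hA)
        (abs_crossSum_le_card_mul hf A B) (abs_nonneg _) (by positivity)
    _ = x ^ γ * (3 * #A * #B) := by ring

end Discrepancy

theorem paley_discrepancy_flat_bound (p : ℕ) [Fact (Nat.Prime p)] (hp4 : p % 4 = 1)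
    (α β : ℝ) (hα : 0 < α) (hβ0 : 0 < β) (hβ2 : β < 2)
    (hdisc : ∀ S : Finset (ZMod p), (p : ℝ) ^ α < (S.card : ℝ) →
      |∑ a ∈ S, ∑ b ∈ S, ((quadraticChar (ZMod p) (a - b) : ℤ) : ℝ)| <
        (S.card : ℝ) ^ (2 - β))
    (τ : ℝ) (hτ : 2 * α / (2 - β) ≤ τ)
    (I J : Finset (ZMod p)) (hIJ : Disjoint I J) (hJI : J.card ≤ I.card)
    (hI : (I.card : ℝ) ≤ (p : ℝ) ^ (2 * τ / (2 - β))) :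
    |∑ i ∈ I, ∑ j ∈ J, ((quadraticChar (ZMod p) (i - j) : ℤ) : ℝ)| ≤
      (p : ℝ) ^ τ * Real.sqrt (3 * I.card * J.card) := by
  have hp : (1 : ℝ) < p := mod_cast (Fact.out : p.Prime).one_lt
  have hβ : 0 < 2 - β := by linarith
  set χ : ZMod p → ℝ := fun y => ((quadraticChar (ZMod p) y : ℤ) : ℝ)
  have hχ : ∀ y, |χ y| ≤ 1 := fun y => by
    simp only [χ]
    exact_mod_cast abs_quadraticChar_le_one y
  have hχ_neg : ∀ y, χ (-y) = χ y := fun y => by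
    simp only [χ, quadraticChar_neg_of_card_mod_four_eq_one (by rwa [ZMod.card]) y]
  have hατ : α ≤ τ := by
    rw [div_le_iff₀ hβ] at hτ
    nlinarith
  have hx : ((p : ℝ) ^ (2 * τ / (2 - β))) ^ (2 - β) = ((p : ℝ) ^ τ) ^ 2 := by
    rw [← Real.rpow_mul (by positivity), ← Real.rpow_natCast, ← Real.rpow_mul (by positivity)]
    congr 1
    field_simp
    ring
  have hT : ((p : ℝ) ^ α) ^ 2 ≤ ((p : ℝ) ^ (2 * τ / (2 - β))) ^ (2 - β) := by
    rw [hx]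
    gcongr
    exact hp.le
  have h := abs_crossSum_le_sqrt_mul hχ hχ_neg hβ.le (by linarith) hT hdisc hIJ hJI hI
  rwa [hx, Real.sqrt_sq (by positivity)] at h
end

section
/- Suppose there exist real numbers γ > 1/2 and τ < 1/2 such that for every ε > 0 and every sufficiently large prime p ≡ 1 (mod 4), the Paley matrix Φ of p satisfies the (⌊p^γ⌋, p^{τ−1/2+ε})-restricted isometry property. Then for every ε > 0 and every sufficiently large prime p ≡ 1 (mod 4), every clique in the Paley graph on F_p has at most p^{τ+ε} vertices. -/
/-!
With `x` the indicator of `S ⊆ 𝔽_p`, the row weights `(1 + χ q)/p` turn the sum over squares `q`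
into a sum over all of `𝔽_p`, so `‖Φx‖² = |S| + (g/p) ∑_{j,k ∈ S} χ(k - j)` with `g` the quadratic
Gauss sum, `|g| = √p`. On a clique of size `k` the double sum is `k(k - 1)`, so RIP bounds the
defect `k(k - 1)/√p` by `δk`, i.e. `k ≤ 1 + δ√p`; larger cliques are excluded by passing to a
subclique of size `K`. With `δ = p^(τ - 1/2 + ε/2)` this is `k ≤ 1 + p^(τ + ε/2)`, and the clique
`{0, 1}` (`-1` is a square since `p ≡ 1 mod 4`) shows `p^(τ + ε/2) ≥ 1`, so
`1 + p^(τ + ε/2) ≤ p^(τ + ε)` for large `p`.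
-/

open scoped BigOperators

/-- The Paley matrix: rows are indexed by the set `Q` of squares in `F_p`, columns
by `F_p` together with one extra index `∗` (here `none`). -/
noncomputable def paleyMatrix (p : ℕ) [Fact (Nat.Prime p)] :
    Matrix {x : ZMod p // IsSquare x} (Option (ZMod p)) ℂ := fun q j =>
  match j with
  | some j =>
      (if (q : ZMod p) = 0 then (1 : ℂ) / Real.sqrt p else (Real.sqrt (2 / p) : ℂ)) *
        Complex.exp (-(2 * Real.pi * Complex.I) * (((q : ZMod p) * j).val : ℕ) / p)
  | none => if (q : ZMod p) = 0 then 1 else 0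

/-- `Φ` satisfies the `(K, δ)`-restricted isometry property: for every real vector
`x` with at most `K` nonzero entries, `(1−δ)‖x‖² ≤ ‖Φx‖² ≤ (1+δ)‖x‖²`. -/
def RIP {m n : Type*} [Fintype m] [Fintype n] (Φ : Matrix m n ℂ)
    (K : ℕ) (δ : ℝ) : Prop :=
  ∀ x : n → ℝ, (Finset.univ.filter fun i => x i ≠ 0).card ≤ K →
    (1 - δ) * (∑ i, x i ^ 2) ≤ ∑ r, ‖∑ i, Φ r i * (x i : ℂ)‖ ^ 2 ∧
    ∑ r, ‖∑ i, Φ r i * (x i : ℂ)‖ ^ 2 ≤ (1 + δ) * (∑ i, x i ^ 2)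

/-- `S` is a clique in the Paley graph on `F_p`: any two distinct elements `x, y` of
`S` are adjacent, i.e. `χ(x − y) = 1` where `χ` is the Legendre symbol. -/
def IsPaleyClique (p : ℕ) [Fact (Nat.Prime p)] (S : Finset (ZMod p)) : Prop :=
  ∀ x ∈ S, ∀ y ∈ S, x ≠ y → quadraticChar (ZMod p) (x - y) = 1

open Finset Filter Real

noncomputable def complexQuadraticChar (F : Type*) [Field F] [Fintype F] [DecidableEq F] :
    MulChar F ℂ :=
  (quadraticChar F).ringHomComp (Int.castRingHom ℂ)

lemma gaussSum_mulShift_eq_of_ne_one {F R : Type*} [Field F] [Fintype F] [CommRing R]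
    [IsDomain R] {χ : MulChar F R} (hχ : χ ≠ 1) (ψ : AddChar F R) (d : F) :
    gaussSum χ (ψ.mulShift d) = χ⁻¹ d * gaussSum χ ψ := by
  rcases eq_or_ne d 0 with rfl | hd
  · simp [gaussSum, MulChar.sum_eq_zero_of_ne_one hχ, MulChar.map_zero]
  · exact gaussSum_mulShift_eq χ ψ (Units.mk0 d hd)

section FiniteField

variable {F : Type*} [Field F] [Fintype F] [DecidableEq F]

@[simp]
lemma complexQuadraticChar_apply (a : F) :
    complexQuadraticChar F a = (quadraticChar F a : ℂ) := rfl

lemma complexQuadraticChar_ne_one (hF : ringChar F ≠ 2) : complexQuadraticChar F ≠ 1 :=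
  fun h ↦ quadraticChar_ne_one hF ((MulChar.ringHomComp_eq_one_iff Int.cast_injective).mp h)

lemma complexQuadraticChar_isQuadratic : (complexQuadraticChar F).IsQuadratic :=
  (quadraticChar_isQuadratic F).comp _

lemma norm_gaussSum_complexQuadraticChar (hF : ringChar F ≠ 2) {ψ : AddChar F ℂ}
    (hψ : ψ.IsPrimitive) :
    ‖gaussSum (complexQuadraticChar F) ψ‖ = √(Fintype.card F) := by
  have hsq := gaussSum_sq (complexQuadraticChar_ne_one hF) complexQuadraticChar_isQuadratic hψ
  have hunit : ‖complexQuadraticChar F (-1)‖ = 1 := by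
    rcases quadraticChar_dichotomy (neg_ne_zero.mpr (one_ne_zero' F)) with h | h <;> simp [h]
  rw [← Real.sqrt_sq (norm_nonneg _), ← norm_pow, hsq, norm_mul, hunit, one_mul,
    Complex.norm_natCast]

lemma sum_one_add_complexQuadraticChar_mul (hF : ringChar F ≠ 2) {ψ : AddChar F ℂ}
    (hψ : ψ.IsPrimitive) (d : F) :
    ∑ t, (1 + complexQuadraticChar F t) * ψ (t * d) =
      (if d = 0 then (Fintype.card F : ℂ) else 0) +
        complexQuadraticChar F d * gaussSum (complexQuadraticChar F) ψ := by
  have hχ := gaussSum_mulShift_eq_of_ne_one (complexQuadraticChar_ne_one hF) ψ d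
  rw [complexQuadraticChar_isQuadratic.inv] at hχ
  rw [← hχ]
  simp only [add_mul, one_mul, sum_add_distrib, AddChar.sum_mulShift d hψ, gaussSum,
    AddChar.mulShift_apply, mul_comm d, Nat.cast_ite, Nat.cast_zero]

lemma sum_isSquare_one_add_quadraticChar_mul {R : Type*} [CommRing R] (f : F → R) :
    ∑ r : {x : F // IsSquare x}, (1 + (quadraticChar F r : R)) * f r =
      ∑ t, (1 + (quadraticChar F t : R)) * f t := by
  rw [← sum_subtype (univ.filter IsSquare) (by simp) fun t ↦ (1 + (quadraticChar F t : R)) * f t,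
    sum_filter_of_ne]
  intro t _ ht
  by_contra hsq
  rw [quadraticChar_neg_one_iff_not_isSquare.mpr hsq] at ht
  simp at ht

end FiniteField

lemma sq_norm_sum_addChar {G ι : Type*} [AddCommGroup G] [Finite G] (ψ : AddChar G ℂ)
    (s : Finset ι) (f : ι → G) :
    ((‖∑ i ∈ s, ψ (f i)‖ ^ 2 : ℝ) : ℂ) = ∑ i ∈ s, ∑ j ∈ s, ψ (f i - f j) := by
  rw [Complex.ofReal_pow, ← Complex.mul_conj', map_sum, sum_mul_sum]
  simp only [← AddChar.map_neg_eq_conj, ← AddChar.map_add_eq_mul, sub_eq_add_neg]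

lemma RIP.abs_sum_sq_norm_sum_sub_card_le {m n : Type*} [Fintype m] [Fintype n] [DecidableEq n]
    {Φ : Matrix m n ℂ} {K : ℕ} {δ : ℝ} (hΦ : RIP Φ K δ) {T : Finset n} (hT : #T ≤ K) :
    |∑ r, ‖∑ i ∈ T, Φ r i‖ ^ 2 - #T| ≤ δ * #T := by
  set x : n → ℝ := fun i ↦ if i ∈ T then 1 else 0
  have hsupp : #(univ.filter fun i ↦ x i ≠ 0) = #T := by simp [x]
  have hx : ∑ i, x i ^ 2 = #T := by simp [x]
  have hΦx (r : m) : ∑ i, Φ r i * (x i : ℂ) = ∑ i ∈ T, Φ r i := by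
    simp [x, apply_ite ((↑) : ℝ → ℂ)]
  obtain ⟨hlow, hup⟩ := hΦ x (hsupp.trans_le hT)
  simp only [hx, hΦx] at hlow hup
  exact abs_sub_le_iff.mpr ⟨by linarith, by linarith⟩

section Paley

variable {p : ℕ} [Fact p.Prime]

local notation "ψ" => ZMod.stdAddChar (N := p)

lemma paleyMatrix_apply_some (r : {x : ZMod p // IsSquare x}) (j : ZMod p) :
    paleyMatrix p r (some j) =
      (√((1 + quadraticChar (ZMod p) r) / p) : ℝ) * ψ (-(r * j)) := by
  have hexp : Complex.exp (-(2 * π * Complex.I) * ((r * j : ZMod p).val : ℕ) / p) =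
      ψ (-(r * j)) := by
    rw [AddChar.map_neg_eq_inv, ZMod.stdAddChar_apply, ZMod.toCircle_apply, ← Complex.exp_neg]
    ring_nf
  rw [paleyMatrix, hexp]
  congr 1
  rcases eq_or_ne (r : ZMod p) 0 with h | h
  · simp [h, Real.sqrt_inv]
  · rw [(quadraticChar_one_iff_isSquare h).mpr r.2]
    norm_num [h]

lemma sq_norm_sum_paleyMatrix (hp : p ≠ 2) (S : Finset (ZMod p)) :
    ((∑ r, ‖∑ j ∈ S, paleyMatrix p r (some j)‖ ^ 2 : ℝ) : ℂ) =
      #S + gaussSum (complexQuadraticChar (ZMod p)) ψ / p *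
        ∑ j ∈ S, ∑ k ∈ S, (quadraticChar (ZMod p) (k - j) : ℂ) := by
  have hF : ringChar (ZMod p) ≠ 2 := by rwa [ZMod.ringChar_zmod_n]
  have hp0 : (p : ℂ) ≠ 0 := by exact_mod_cast (Fact.out : p.Prime).ne_zero
  have hrow (r : {x : ZMod p // IsSquare x}) :
      ((‖∑ j ∈ S, paleyMatrix p r (some j)‖ ^ 2 : ℝ) : ℂ) =
        (1 + (quadraticChar (ZMod p) r : ℂ)) * ∑ j ∈ S, ∑ k ∈ S, ψ (r * (k - j)) / p := by
    have hnonneg : (0 : ℝ) ≤ (1 + quadraticChar (ZMod p) r) / p := by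
      rcases eq_or_ne (r : ZMod p) 0 with h | h
      · simp [h]
      · rw [(quadraticChar_one_iff_isSquare h).mpr r.2]
        positivity
    simp_rw [paleyMatrix_apply_some, ← mul_sum, norm_mul, mul_pow, Complex.norm_real,
      Real.norm_eq_abs, sq_abs, Real.sq_sqrt hnonneg, Complex.ofReal_mul,
      sq_norm_sum_addChar, mul_sum, ← mul_div_assoc, mul_div_right_comm]
    push_cast
    refine sum_congr rfl fun j _ ↦ sum_congr rfl fun k _ ↦ ?_
    ring_nf
  calc ((∑ r, ‖∑ j ∈ S, paleyMatrix p r (some j)‖ ^ 2 : ℝ) : ℂ)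
      = ∑ t, (1 + (quadraticChar (ZMod p) t : ℂ)) * ∑ j ∈ S, ∑ k ∈ S, ψ (t * (k - j)) / p := by
        rw [Complex.ofReal_sum, ← sum_isSquare_one_add_quadraticChar_mul]
        exact sum_congr rfl fun r _ ↦ hrow r
    _ = ∑ j ∈ S, ∑ k ∈ S, (∑ t, (1 + complexQuadraticChar (ZMod p) t) * ψ (t * (k - j))) / p := by
        simp_rw [mul_sum, sum_div]
        rw [sum_comm]
        refine sum_congr rfl fun j _ ↦ sum_comm.trans (sum_congr rfl fun k _ ↦ ?_)
        simp [mul_div_assoc]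
    _ = _ := by
        simp_rw [sum_one_add_complexQuadraticChar_mul hF (ZMod.isPrimitive_stdAddChar p), sub_eq_zero,
          add_div, sum_add_distrib, ite_div, zero_div, sum_ite_eq', ZMod.card, div_self hp0,
          sum_ite_mem, inter_self, sum_const, nsmul_one, complexQuadraticChar_apply, mul_sum]
        congr 1
        refine sum_congr rfl fun j _ ↦ sum_congr rfl fun k _ ↦ ?_
        ring

lemma IsPaleyClique.mono {S T : Finset (ZMod p)} (hS : IsPaleyClique p S) (hTS : T ⊆ S) :
    IsPaleyClique p T :=
  fun x hx y hy hxy ↦ hS x (hTS hx) y (hTS hy) hxy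

lemma IsPaleyClique.sum_sum_quadraticChar_sub {S : Finset (ZMod p)} (hS : IsPaleyClique p S) :
    ∑ j ∈ S, ∑ k ∈ S, quadraticChar (ZMod p) (k - j) = #S * (#S - 1 : ℤ) := by
  have hrow : ∀ j ∈ S, ∑ k ∈ S, quadraticChar (ZMod p) (k - j) = #S - 1 := by
    intro j hj
    rw [← add_sum_erase S _ hj, sub_self, quadraticChar_zero, zero_add,
      sum_congr rfl fun k hk ↦ hS k (mem_of_mem_erase hk) j hj (ne_of_mem_erase hk),
      sum_const, card_erase_of_mem hj, nsmul_one, Nat.cast_pred (card_pos.mpr ⟨j, hj⟩)]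
  rw [sum_congr rfl hrow, sum_const, nsmul_eq_mul]

lemma isPaleyClique_zero_one (hp : p % 4 = 1) : IsPaleyClique p {0, 1} := by
  have hneg : quadraticChar (ZMod p) (-1) = 1 :=
    (quadraticChar_one_iff_isSquare (neg_ne_zero.mpr one_ne_zero)).mpr
      (FiniteField.isSquare_neg_one_iff.mpr (by rw [ZMod.card]; omega))
  intro x hx y hy hxy
  simp only [mem_insert, mem_singleton] at hx hy
  rcases hx with rfl | rfl <;> rcases hy with rfl | rfl <;> simp_all

lemma IsPaleyClique.card_le_of_RIP_of_card_le (hp : p ≠ 2) {K : ℕ} {δ : ℝ} (hδ : 0 ≤ δ)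
    (hΦ : RIP (paleyMatrix p) K δ) {S : Finset (ZMod p)} (hS : IsPaleyClique p S)
    (hSK : #S ≤ K) : (#S : ℝ) ≤ 1 + δ * √p := by
  have hF : ringChar (ZMod p) ≠ 2 := by rwa [ZMod.ringChar_zmod_n]
  have hp0 : (0 : ℝ) < p := by exact_mod_cast (Fact.out : p.Prime).pos
  rcases S.eq_empty_or_nonempty with rfl | hne
  · simp only [card_empty, Nat.cast_zero]
    positivity
  set k : ℝ := (#S : ℝ)
  have hk : 1 ≤ k := by simpa [k] using hne.card_pos
  have hRIP := hΦ.abs_sum_sq_norm_sum_sub_card_le (T := S.map .some) (by rwa [card_map])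
  simp only [card_map, sum_map, Function.Embedding.some_apply] at hRIP
  have hdefect : ((∑ r, ‖∑ j ∈ S, paleyMatrix p r (some j)‖ ^ 2 - k : ℝ) : ℂ) =
      (k * (k - 1) : ℝ) * (gaussSum (complexQuadraticChar (ZMod p)) ψ / p) := by
    have hsum := congrArg (Int.cast : ℤ → ℂ) hS.sum_sum_quadraticChar_sub
    push_cast at hsum
    rw [Complex.ofReal_sub, sq_norm_sum_paleyMatrix hp, hsum]
    push_cast [k]
    ring
  have habs : k * (k - 1) / √p ≤ δ * k := by
    have hnorm := congrArg norm hdefect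
    rw [Complex.norm_real, Real.norm_eq_abs, norm_mul, norm_div, Complex.norm_real,
      norm_gaussSum_complexQuadraticChar hF (ZMod.isPrimitive_stdAddChar p), ZMod.card,
      Complex.norm_natCast, Real.norm_of_nonneg (by nlinarith), Real.sqrt_div_self',
      mul_one_div] at hnorm
    exact hnorm ▸ hRIP
  rw [div_le_iff₀ (by positivity)] at habs
  have hk1 : k - 1 ≤ δ * √p := le_of_mul_le_mul_left (a := k) (by linarith) (by linarith)
  linarith

lemma IsPaleyClique.card_le_of_RIP (hp : p ≠ 2) {K : ℕ} {δ : ℝ} (hδ : 0 ≤ δ)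
    (hΦ : RIP (paleyMatrix p) K δ) (hK : 1 + δ * √p < K) {S : Finset (ZMod p)}
    (hS : IsPaleyClique p S) : (#S : ℝ) ≤ 1 + δ * √p := by
  rcases le_or_gt #S K with hSK | hKS
  · exact hS.card_le_of_RIP_of_card_le hp hδ hΦ hSK
  · obtain ⟨T, hTS, hT⟩ := exists_subset_card_eq hKS.le
    have hT_le := (hS.mono hTS).card_le_of_RIP_of_card_le hp hδ hΦ hT.le
    rw [hT] at hT_le
    linarith

end Paley

lemma eventually_one_add_rpow_lt_floor_rpow {α γ : ℝ} (hαγ : α < γ) (hγ : 0 < γ) :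
    ∀ᶠ n : ℕ in atTop, 1 + (n : ℝ) ^ α < ⌊(n : ℝ) ^ γ⌋₊ := by
  have hgap := ((tendsto_rpow_atTop (sub_pos.mpr hαγ)).comp
    tendsto_natCast_atTop_atTop).eventually_ge_atTop 2
  have hlarge := ((tendsto_rpow_atTop hγ).comp tendsto_natCast_atTop_atTop).eventually_ge_atTop 4
  filter_upwards [hgap, hlarge, eventually_gt_atTop 0] with n hgap hlarge hn
  have hn' : (0 : ℝ) < n := by exact_mod_cast hn
  have hsplit : (n : ℝ) ^ γ = n ^ α * n ^ (γ - α) := by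
    rw [← rpow_add hn', add_sub_cancel]
  have hα := rpow_pos_of_pos hn' α
  have := Nat.sub_one_lt_floor ((n : ℝ) ^ γ)
  simp only [Function.comp_apply] at hgap hlarge
  nlinarith

theorem paley_RIP_implies_paley_clique_bound (γ τ : ℝ) (hγ : 1 / 2 < γ) (hτ : τ < 1 / 2)
    (h : ∀ ε : ℝ, 0 < ε →
      ∃ p₀ : ℕ, ∀ (p : ℕ) [Fact (Nat.Prime p)], p % 4 = 1 → p₀ ≤ p →
        RIP (paleyMatrix p) ⌊(p : ℝ) ^ γ⌋₊ ((p : ℝ) ^ (τ - 1 / 2 + ε))) :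
    ∀ ε : ℝ, 0 < ε →
      ∃ p₀ : ℕ, ∀ (p : ℕ) [Fact (Nat.Prime p)], p % 4 = 1 → p₀ ≤ p →
        ∀ S : Finset (ZMod p), IsPaleyClique p S → (S.card : ℝ) ≤ (p : ℝ) ^ (τ + ε) := by
  intro ε hε
  -- `η ≤ γ - τ` keeps the clique bound `1 + p^(τ + η/2)` below the sparsity level `⌊p^γ⌋`.
  set η := min ε (γ - τ)
  have hη : 0 < η := lt_min hε (by linarith)
  obtain ⟨p₀, hp₀⟩ := h (η / 2) (by positivity)
  obtain ⟨N, hN⟩ := eventually_atTop.mp <|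
    (eventually_one_add_rpow_lt_floor_rpow (α := τ + η / 2) (γ := γ)
      (by linarith [min_le_right ε (γ - τ)]) (by linarith)).and
    (((tendsto_rpow_atTop (y := η / 2) (by positivity)).comp
      tendsto_natCast_atTop_atTop).eventually_ge_atTop (2 : ℝ))
  refine ⟨max p₀ N, fun p _ hp4 hp S hS ↦ ?_⟩
  obtain ⟨hK, htwo⟩ := hN p (le_of_max_le_right hp)
  simp only [Function.comp_apply] at htwo
  have hp1 : (1 : ℝ) ≤ p := by exact_mod_cast (Fact.out : p.Prime).one_lt.le
  have hδ : (p : ℝ) ^ (τ - 1 / 2 + η / 2) * √p = p ^ (τ + η / 2) := by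
    rw [sqrt_eq_rpow, ← rpow_add (by linarith)]
    ring_nf
  have hclique (T : Finset (ZMod p)) (hT : IsPaleyClique p T) : (#T : ℝ) ≤ 1 + p ^ (τ + η / 2) :=
    hδ ▸ hT.card_le_of_RIP (by omega) (rpow_nonneg (by linarith) _)
      (hp₀ p hp4 (le_of_max_le_left hp)) (hδ ▸ hK)
  have hone : 1 ≤ (p : ℝ) ^ (τ + η / 2) := by
    have := hclique _ (isPaleyClique_zero_one hp4)
    rw [card_pair zero_ne_one] at this
    linarith
  calc (#S : ℝ) ≤ 1 + p ^ (τ + η / 2) := hclique S hS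
    _ ≤ p ^ (η / 2) * p ^ (τ + η / 2) := by nlinarith
    _ = p ^ (τ + η) := by rw [← rpow_add (by linarith)]; ring_nf
    _ ≤ p ^ (τ + ε) := rpow_le_rpow_of_exponent_le hp1 (by linarith [min_le_left ε (γ - τ)])
end
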